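/- Let n ≥ 2, 0 < α ≤ β, and let f_1, …, f_n : ℝ → ℝ each belong to the class F(α,β). Then for every x ∈ ℝⁿ with x_i ≥ 0 for all i and ∑_{i=1}^n x_i = n, the expected change of the total cost under the departure of a uniformly chosen agent satisfies (1/n)·∑_{ℓ=1}^n ∑_{i ≠ ℓ} f_i( (1 − 1/n)·x_i + (1/n)·x_ℓ ) − ∑_{i=1}^n f_i(x_i) ≤ 2β − (3/2)α. -/

import Mathlib

/-!
After a departure, each agent's cost is bounded by a second-order Taylor expansion at its
current estimate, with constant `β` in the quadratic term (the sharp `β/2` is not needed).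
The first-order term is controlled by `αz² ≤ f'(z) z` (strong convexity) and `f'(z) ≤ βz`
for `z ≥ 0` (smoothness and `f'(0) = 0`). Summed over all departures, the bound depends on `x`
only through `F = ∑ fᵢ(xᵢ)` and `Q = ∑ xᵢ²`, and `F ≥ αQ/2` together with `n ≤ Q ≤ n²` on the
simplex `Sₙ` finishes the estimate.
-/

/-- The class `F(α,β)`: differentiable, `α`-strongly convex (`x ↦ f x - (α/2)x²`
is convex), `β`-smooth (the derivative is `β`-Lipschitz), with `f(0) = 0` and
`f'(0) = 0`. -/
def MemF (α β : ℝ) (f : ℝ → ℝ) : Prop :=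
  Differentiable ℝ f ∧
  ConvexOn ℝ Set.univ (fun x => f x - α / 2 * x ^ 2) ∧
  (∀ x y : ℝ, |deriv f x - deriv f y| ≤ β * |x - y|) ∧
  f 0 = 0 ∧ deriv f 0 = 0

open Finset Set

lemma le_add_deriv_mul_add_sq_of_abs_deriv_sub_le {f : ℝ → ℝ} {β : ℝ}
    (hd : Differentiable ℝ f) (hlip : ∀ x y, |deriv f x - deriv f y| ≤ β * |x - y|)
    (x y : ℝ) :
    f y ≤ f x + deriv f x * (y - x) + β * (y - x) ^ 2 := by
  have hβ : 0 ≤ β := by simpa using (abs_nonneg _).trans (hlip 1 0)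
  have hderiv : ∀ t, HasDerivAt (fun t => f t - deriv f x * t) (deriv f t - deriv f x) t :=
    fun t => by
      simpa using (hd t).hasDerivAt.fun_sub ((hasDerivAt_id t).const_mul (deriv f x))
  have hbound : ∀ t ∈ uIcc x y, ‖deriv f t - deriv f x‖ ≤ β * |y - x| := fun t ht =>
    (hlip t x).trans (mul_le_mul_of_nonneg_left (abs_sub_left_of_mem_uIcc ht) hβ)
  have hmvt := (convex_uIcc x y).norm_image_sub_le_of_norm_hasDerivWithin_le
    (fun t _ => (hderiv t).hasDerivWithinAt) hbound left_mem_uIcc right_mem_uIcc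
  simp only [Real.norm_eq_abs] at hmvt
  rw [mul_assoc, ← abs_mul, abs_mul_self] at hmvt
  linarith [le_abs_self (f y - deriv f x * y - (f x - deriv f x * x))]

namespace ConvexOn

variable {g : ℝ → ℝ}

lemma isMinOn_of_deriv_eq_zero {x : ℝ} (hg : ConvexOn ℝ univ g)
    (hd : DifferentiableAt ℝ g x) (hg' : deriv g x = 0) : IsMinOn g univ x := by
  refine hg.isMinOn_of_rightDeriv_eq_zero (by simp) ?_
  rw [hd.hasDerivAt.hasDerivWithinAt.derivWithin (uniqueDiffWithinAt_Ioi x), hg']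

lemma deriv_mul_nonneg_of_deriv_zero (hg : ConvexOn ℝ univ g) (hd : Differentiable ℝ g)
    (hg'0 : deriv g 0 = 0) (z : ℝ) : 0 ≤ deriv g z * z := by
  have hmono := hg.monotoneOn_deriv fun t _ => hd t
  rcases le_total 0 z with hz | hz
  · exact mul_nonneg (hg'0 ▸ hmono (mem_univ 0) (mem_univ z) hz) hz
  · exact mul_nonneg_of_nonpos_of_nonpos (hg'0 ▸ hmono (mem_univ z) (mem_univ 0) hz) hz

end ConvexOn

lemma hasDerivAt_sub_half_mul_sq {f : ℝ → ℝ} {z : ℝ} (α : ℝ) (hf : DifferentiableAt ℝ f z) :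
    HasDerivAt (fun x => f x - α / 2 * x ^ 2) (deriv f z - α * z) z := by
  refine (hf.hasDerivAt.fun_sub ((hasDerivAt_pow 2 z).const_mul (α / 2))).congr_deriv ?_
  push_cast
  ring

namespace MemF

variable {α β : ℝ} {f : ℝ → ℝ}

lemma half_mul_sq_le (hf : MemF α β f) (z : ℝ) : α / 2 * z ^ 2 ≤ f z := by
  obtain ⟨hd, hconv, -, h0, h'0⟩ := hf
  have hmin := isMinOn_iff.mp (hconv.isMinOn_of_deriv_eq_zero
    (hasDerivAt_sub_half_mul_sq α (hd 0)).differentiableAt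
    (by simp [(hasDerivAt_sub_half_mul_sq α (hd 0)).deriv, h'0])) z (mem_univ z)
  simp only [h0] at hmin
  linarith

lemma mul_sq_le_deriv_mul (hf : MemF α β f) (z : ℝ) : α * z ^ 2 ≤ deriv f z * z := by
  obtain ⟨hd, hconv, -, -, h'0⟩ := hf
  have hderiv t := (hasDerivAt_sub_half_mul_sq α (hd t)).deriv
  have := hconv.deriv_mul_nonneg_of_deriv_zero
    (fun t => (hasDerivAt_sub_half_mul_sq α (hd t)).differentiableAt) (by simp [hderiv, h'0]) z
  rw [hderiv] at this
  linarith

lemma deriv_le (hf : MemF α β f) {z : ℝ} (hz : 0 ≤ z) : deriv f z ≤ β * z := by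
  have := hf.2.2.1 z 0
  rw [hf.2.2.2.2, sub_zero, sub_zero, abs_of_nonneg hz] at this
  exact (le_abs_self _).trans this

lemma apply_add_mul_sub_le (hf : MemF α β f) {a b s : ℝ} (ha : 0 ≤ a) (hb : 0 ≤ b)
    (hs : 0 ≤ s) :
    f (a + s * (b - a)) ≤ f a + s * (β * a * b - α * a ^ 2) + β * s ^ 2 * (b - a) ^ 2 := by
  have htaylor := le_add_deriv_mul_add_sq_of_abs_deriv_sub_le hf.1 hf.2.2.1 a (a + s * (b - a))
  have hslope : deriv f a * (b - a) ≤ β * a * b - α * a ^ 2 := by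
    nlinarith [mul_le_mul_of_nonneg_right (hf.deriv_le ha) hb, hf.mul_sq_le_deriv_mul a]
  nlinarith [mul_le_mul_of_nonneg_left hslope hs]

end MemF

lemma sum_sum_erase_quadratic_eq {ι : Type*} [Fintype ι] [DecidableEq ι] (c x : ι → ℝ)
    (a b s : ℝ) :
    ∑ ℓ, ∑ i ∈ univ.erase ℓ,
        (c i + s * (b * x i * x ℓ - a * x i ^ 2) + b * s ^ 2 * (x ℓ - x i) ^ 2)
      = (Fintype.card ι - 1) * ∑ i, c i + s * b * ((∑ i, x i) ^ 2 - ∑ i, x i ^ 2)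
        - s * a * (Fintype.card ι - 1) * ∑ i, x i ^ 2
        + 2 * b * s ^ 2 * (Fintype.card ι * ∑ i, x i ^ 2 - (∑ i, x i) ^ 2) := by
  have hdiag : ∀ i, c i + s * (b * x i * x i - a * x i ^ 2) + b * s ^ 2 * (x i - x i) ^ 2
      = c i + s * (b - a) * x i ^ 2 := fun i => by ring
  simp only [sum_erase_eq_sub (mem_univ _), sum_sub_distrib, hdiag]
  have hexpand : ∀ i ℓ, c i + s * (b * x i * x ℓ - a * x i ^ 2) + b * s ^ 2 * (x ℓ - x i) ^ 2
      = c i + (s * b - 2 * b * s ^ 2) * x ℓ * x i + (b * s ^ 2 - s * a) * x i ^ 2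
        + b * s ^ 2 * x ℓ ^ 2 := fun i ℓ => by ring
  simp only [hexpand, sum_add_distrib, ← mul_sum, ← sum_mul, sum_const, card_univ,
    nsmul_eq_mul]
  ring

lemma expected_change_le_of_moments {N α β Q F : ℝ} (hN : 2 ≤ N) (hα : 0 < α)
    (hαβ : α ≤ β) (hQN : N ≤ Q) (hQN2 : Q ≤ N ^ 2) (hFQ : α / 2 * Q ≤ F) :
    1 / N * ((N - 1) * F + 1 / N * β * (N ^ 2 - Q) - 1 / N * α * (N - 1) * Q
        + 2 * β * (1 / N) ^ 2 * (N * Q - N ^ 2)) - F ≤ 2 * β - 3 / 2 * α := by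
  have hN0 : 0 < N := by linarith
  have hform : 1 / N * ((N - 1) * F + 1 / N * β * (N ^ 2 - Q) - 1 / N * α * (N - 1) * Q
        + 2 * β * (1 / N) ^ 2 * (N * Q - N ^ 2)) - F
      = (β * N ^ 2 - 2 * β * N + (β - α * (N - 1)) * Q - N * F) / N ^ 2 := by
    field_simp
    ring
  rw [hform, div_le_iff₀ (by positivity)]
  nlinarith [mul_le_mul_of_nonneg_left hQN2 (hα.le.trans hαβ),
    mul_le_mul_of_nonneg_left hFQ hN0.le,
    mul_le_mul_of_nonneg_left hQN (by nlinarith : 0 ≤ α * (3 / 2 * N - 1))]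

/-- For local costs in `F(α,β)` and feasible `x ∈ Sₙ`, the
expected change of the total cost under the departure of a uniformly chosen
agent is at most `2β - (3/2)α`. -/
theorem stmt_11 (n : ℕ) (hn : 2 ≤ n) (α β : ℝ) (hα : 0 < α) (hαβ : α ≤ β)
    (f : Fin n → ℝ → ℝ) (hf : ∀ i, MemF α β (f i))
    (x : Fin n → ℝ) (hx : ∀ i, 0 ≤ x i) (hsum : ∑ i, x i = (n : ℝ)) :
    (1 / (n : ℝ)) * (∑ ℓ, ∑ i ∈ Finset.univ.erase ℓ,
        f i ((1 - 1 / (n : ℝ)) * x i + (1 / (n : ℝ)) * x ℓ))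
      - ∑ i, f i (x i)
      ≤ 2 * β - 3 / 2 * α := by
  have hN : (2 : ℝ) ≤ n := by exact_mod_cast hn
  set N : ℝ := (n : ℝ)
  have hpair : ∀ ℓ i, f i ((1 - 1 / N) * x i + 1 / N * x ℓ) ≤ f i (x i)
      + 1 / N * (β * x i * x ℓ - α * x i ^ 2) + β * (1 / N) ^ 2 * (x ℓ - x i) ^ 2 := by
    intro ℓ i
    convert (hf i).apply_add_mul_sub_le (hx i) (hx ℓ) (by positivity : (0 : ℝ) ≤ 1 / N)
      using 2
    ring
  have hdouble := sum_le_sum fun ℓ (_ : ℓ ∈ Finset.univ) =>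
    sum_le_sum fun i (_ : i ∈ Finset.univ.erase ℓ) => hpair ℓ i
  rw [sum_sum_erase_quadratic_eq, hsum, Fintype.card_fin] at hdouble
  have hQN : N ≤ ∑ i, x i ^ 2 := by
    have := sq_sum_le_card_mul_sum_sq (s := univ) (f := x)
    rw [hsum, card_univ, Fintype.card_fin, sq] at this
    exact le_of_mul_le_mul_left this (by positivity)
  have hQN2 : ∑ i, x i ^ 2 ≤ N ^ 2 := hsum ▸ sum_sq_le_sq_sum_of_nonneg fun i _ => hx i
  have hFQ : α / 2 * ∑ i, x i ^ 2 ≤ ∑ i, f i (x i) := by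
    rw [mul_sum]
    exact sum_le_sum fun i _ => (hf i).half_mul_sq_le (x i)
  refine le_trans ?_ (expected_change_le_of_moments hN hα hαβ hQN hQN2 hFQ)
  gcongr
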